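/- Let k be a field, let (H, Δ, ε) be a coalgebra over k, let Γ be an index set, and for each i ∈ Γ let V_i be a k-vector space together with linear maps Δ_i and ε_i making the vector space H ⊕ V_i a coalgebra in such a way that the canonical inclusion H → H ⊕ V_i is a morphism of coalgebras (i.e. Δ_i and ε_i restrict to Δ and ε on H). Set W = H ⊕ (⊕_{i∈Γ} V_i). Then there exist k-linear maps Δ̄ : W → W ⊗ W and ε̄ : W → k making (W, Δ̄, ε̄) a coalgebra such that for every i ∈ Γ the canonical inclusion H ⊕ V_i → W is a morphism of coalgebras; in particular H is a subcoalgebra of W. -/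

import Mathlib

open scoped TensorProduct DirectSum

def IsCoalgMor {k A B : Type*} [CommSemiring k] [AddCommMonoid A] [Module k A]
    [AddCommMonoid B] [Module k B]
    (cA : CoalgebraStruct k A) (cB : CoalgebraStruct k B) (f : A →ₗ[k] B) : Prop :=
  cB.comul ∘ₗ f = TensorProduct.map f f ∘ₗ cA.comul ∧ cB.counit ∘ₗ f = cA.counit

/-!
The coalgebra axioms for a pair `(Δ, ε)` on `W` are equalities of linear maps out of `W`, so the
set of vectors at which they hold is a subspace of `W`; it contains the image of every coalgebra
morphism from a coalgebra into `(W, Δ, ε)`. On `W = H ⊕ ⨁ᵢ Vᵢ` define `Δ` and `ε` to be `Δ_H`,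
`ε_H` on `H` and `Δᵢ`, `εᵢ` (pushed forward along `H ⊕ Vᵢ → W`) on each `Vᵢ`. Because
`H → H ⊕ Vᵢ` is a coalgebra morphism, each `H ⊕ Vᵢ → W` is then one too, and these images
span `W`.
-/

open TensorProduct LinearMap

theorem LinearMap.range_le_eqLocus_of_comp_eq {R M N P : Type*} [Semiring R]
    [AddCommMonoid M] [Module R M] [AddCommMonoid N] [Module R N] [AddCommMonoid P] [Module R P]
    {f : M →ₗ[R] N} {F G : N →ₗ[R] P} (h : F ∘ₗ f = G ∘ₗ f) : range f ≤ eqLocus F G := by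
  rintro _ ⟨m, rfl⟩
  exact congr($h m)

namespace CoalgebraStruct

variable {k W : Type*} [CommSemiring k] [AddCommMonoid W] [Module k W]

def coalgebraLocus (c : CoalgebraStruct k W) : Submodule k W :=
  eqLocus ((TensorProduct.assoc k W W W).toLinearMap ∘ₗ c.comul.rTensor W ∘ₗ c.comul)
      (c.comul.lTensor W ∘ₗ c.comul) ⊓
    eqLocus (c.counit.rTensor W ∘ₗ c.comul) (TensorProduct.mk k k W 1) ⊓
    eqLocus (c.counit.lTensor W ∘ₗ c.comul) ((TensorProduct.mk k W k).flip 1)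

abbrev toCoalgebra (c : CoalgebraStruct k W) (h : c.coalgebraLocus = ⊤) : Coalgebra k W where
  __ := c
  coassoc := eqLocus_eq_top.1 <| eq_top_iff.2 <| h.ge.trans <| inf_le_left.trans inf_le_left
  rTensor_counit_comp_comul :=
    eqLocus_eq_top.1 <| eq_top_iff.2 <| h.ge.trans <| inf_le_left.trans inf_le_right
  lTensor_counit_comp_comul := eqLocus_eq_top.1 <| eq_top_iff.2 <| h.ge.trans inf_le_right

end CoalgebraStruct

namespace IsCoalgMor

variable {k A W : Type*} [CommSemiring k] [AddCommMonoid A] [Module k A]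
  [AddCommMonoid W] [Module k W] {cA : Coalgebra k A} {cW : CoalgebraStruct k W}
  {f : A →ₗ[k] W}

theorem coassoc_comp (hf : IsCoalgMor cA.toCoalgebraStruct cW f) :
    ((TensorProduct.assoc k W W W).toLinearMap ∘ₗ cW.comul.rTensor W ∘ₗ cW.comul) ∘ₗ f =
      (cW.comul.lTensor W ∘ₗ cW.comul) ∘ₗ f := by
  have hr : cW.comul.rTensor W ∘ₗ map f f = map (map f f) f ∘ₗ cA.comul.rTensor A := by
    rw [rTensor_comp_map, map_comp_rTensor, hf.1]
  have hl : cW.comul.lTensor W ∘ₗ map f f = map f (map f f) ∘ₗ cA.comul.lTensor A := by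
    rw [lTensor_comp_map, map_comp_lTensor, hf.1]
  calc ((TensorProduct.assoc k W W W).toLinearMap ∘ₗ cW.comul.rTensor W ∘ₗ cW.comul) ∘ₗ f
      = (TensorProduct.assoc k W W W).toLinearMap ∘ₗ map (map f f) f ∘ₗ
          cA.comul.rTensor A ∘ₗ cA.comul := by
        simp only [comp_assoc, hf.1, ← comp_assoc _ _ (cW.comul.rTensor W), hr]
    _ = map f (map f f) ∘ₗ (TensorProduct.assoc k A A A).toLinearMap ∘ₗ
          cA.comul.rTensor A ∘ₗ cA.comul := by
        rw [← comp_assoc _ _ (TensorProduct.assoc k W W W).toLinearMap,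
          ← map_map_comp_assoc_eq, comp_assoc]
    _ = (cW.comul.lTensor W ∘ₗ cW.comul) ∘ₗ f := by
        simp only [Coalgebra.coassoc, comp_assoc, hf.1, ← comp_assoc _ _ (cW.comul.lTensor W), hl]

theorem rTensor_counit_comp_comul_comp (hf : IsCoalgMor cA.toCoalgebraStruct cW f) :
    (cW.counit.rTensor W ∘ₗ cW.comul) ∘ₗ f = TensorProduct.mk k k W 1 ∘ₗ f := by
  have h : cW.counit.rTensor W ∘ₗ map f f = f.lTensor k ∘ₗ cA.counit.rTensor A := by
    rw [rTensor_comp_map, hf.2, ← lTensor_comp_rTensor]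
  rw [comp_assoc, hf.1, ← comp_assoc, h, comp_assoc, Coalgebra.rTensor_counit_comp_comul]
  ext
  simp

theorem lTensor_counit_comp_comul_comp (hf : IsCoalgMor cA.toCoalgebraStruct cW f) :
    (cW.counit.lTensor W ∘ₗ cW.comul) ∘ₗ f = (TensorProduct.mk k W k).flip 1 ∘ₗ f := by
  have h : cW.counit.lTensor W ∘ₗ map f f = f.rTensor k ∘ₗ cA.counit.lTensor A := by
    rw [lTensor_comp_map, hf.2, ← rTensor_comp_lTensor]
  rw [comp_assoc, hf.1, ← comp_assoc, h, comp_assoc, Coalgebra.lTensor_counit_comp_comul]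
  ext
  simp

theorem range_le_coalgebraLocus (hf : IsCoalgMor cA.toCoalgebraStruct cW f) :
    range f ≤ cW.coalgebraLocus :=
  le_inf (le_inf (range_le_eqLocus_of_comp_eq hf.coassoc_comp)
    (range_le_eqLocus_of_comp_eq hf.rTensor_counit_comp_comul_comp))
    (range_le_eqLocus_of_comp_eq hf.lTensor_counit_comp_comul_comp)

end IsCoalgMor

section DirectSumExtension

variable {k H Γ : Type*} {V : Γ → Type*} [CommSemiring k] [AddCommMonoid H] [Module k H]
  [DecidableEq Γ] [∀ i, AddCommMonoid (V i)] [∀ i, Module k (V i)]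

theorem prodMap_id_lof_comp_inl (i : Γ) :
    LinearMap.id.prodMap (DirectSum.lof k Γ V i) ∘ₗ inl k H (V i) =
      inl k H (⨁ i, V i) := by
  ext <;> simp

theorem prodMap_id_lof_comp_inr (i : Γ) :
    LinearMap.id.prodMap (DirectSum.lof k Γ V i) ∘ₗ inr k H (V i) =
      inr k H (⨁ i, V i) ∘ₗ DirectSum.lof k Γ V i := by
  ext <;> simp

theorem range_inl_sup_iSup_range_prodMap_lof :
    range (inl k H (⨁ i, V i)) ⊔ ⨆ i, range (LinearMap.id.prodMap (DirectSum.lof k Γ V i)) = ⊤ := by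
  rw [eq_top_iff]
  rintro ⟨h, x⟩ -
  rw [show (h, x) = (h, 0) + (0, x) by simp]
  refine add_mem (Submodule.mem_sup_left ⟨h, rfl⟩) (Submodule.mem_sup_right ?_)
  induction x using DirectSum.induction_on with
  | zero => exact zero_mem _
  | of i v => exact Submodule.mem_iSup_of_mem i ⟨(0, v), by simp [DirectSum.lof_eq_of]⟩
  | add x y hx hy => simpa using add_mem hx hy

abbrev directSumExtension (cH : CoalgebraStruct k H) (cHV : ∀ i, CoalgebraStruct k (H × V i)) :
    CoalgebraStruct k (H × ⨁ i, V i) where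
  comul := coprod (map (inl k H _) (inl k H _) ∘ₗ cH.comul)
    (DirectSum.toModule k Γ _ fun i =>
      map (LinearMap.id.prodMap (DirectSum.lof k Γ V i))
          (LinearMap.id.prodMap (DirectSum.lof k Γ V i)) ∘ₗ
        (cHV i).comul ∘ₗ inr k H (V i))
  counit := coprod cH.counit (DirectSum.toModule k Γ k fun i => (cHV i).counit ∘ₗ inr k H (V i))

variable (cH : CoalgebraStruct k H) (cHV : ∀ i, CoalgebraStruct k (H × V i))

theorem directSumExtension_comul_comp_inr_comp_lof (i : Γ) :
    (directSumExtension cH cHV).comul ∘ₗ inr k H (⨁ i, V i) ∘ₗ DirectSum.lof k Γ V i =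
      map (LinearMap.id.prodMap (DirectSum.lof k Γ V i))
          (LinearMap.id.prodMap (DirectSum.lof k Γ V i)) ∘ₗ
        (cHV i).comul ∘ₗ inr k H (V i) := by
  change coprod _ _ ∘ₗ _ ∘ₗ _ = _
  rw [← comp_assoc, coprod_inr]
  exact LinearMap.ext fun v => (comp_apply _ _ v).trans (DirectSum.toModule_lof k i v)

theorem directSumExtension_counit_comp_inr_comp_lof (i : Γ) :
    (directSumExtension cH cHV).counit ∘ₗ inr k H (⨁ i, V i) ∘ₗ DirectSum.lof k Γ V i =
      (cHV i).counit ∘ₗ inr k H (V i) := by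
  change coprod _ _ ∘ₗ _ ∘ₗ _ = _
  rw [← comp_assoc, coprod_inr]
  exact LinearMap.ext fun v => (comp_apply _ _ v).trans (DirectSum.toModule_lof k i v)

theorem isCoalgMor_inl_directSumExtension :
    IsCoalgMor cH (directSumExtension cH cHV) (inl k H (⨁ i, V i)) :=
  ⟨coprod_inl _ _, coprod_inl _ _⟩

theorem isCoalgMor_prodMap_lof_directSumExtension {i : Γ}
    (hincl : IsCoalgMor cH (cHV i) (inl k H (V i))) :
    IsCoalgMor (cHV i) (directSumExtension cH cHV)
      (LinearMap.id.prodMap (DirectSum.lof k Γ V i)) := by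
  obtain ⟨hΔ, hε⟩ := isCoalgMor_inl_directSumExtension cH cHV
  constructor <;> apply prod_ext
  · rw [comp_assoc, prodMap_id_lof_comp_inl, hΔ, comp_assoc, hincl.1, ← comp_assoc,
      ← map_comp, prodMap_id_lof_comp_inl]
  · rw [comp_assoc, prodMap_id_lof_comp_inr, directSumExtension_comul_comp_inr_comp_lof,
      comp_assoc]
  · rw [comp_assoc, prodMap_id_lof_comp_inl, hε, hincl.2]
  · rw [comp_assoc, prodMap_id_lof_comp_inr, directSumExtension_counit_comp_inr_comp_lof]

theorem coalgebraLocus_directSumExtension (cH : Coalgebra k H) (cHV : ∀ i, Coalgebra k (H × V i))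
    (hincl : ∀ i, IsCoalgMor cH.toCoalgebraStruct (cHV i).toCoalgebraStruct (inl k H (V i))) :
    (directSumExtension cH.toCoalgebraStruct fun i => (cHV i).toCoalgebraStruct).coalgebraLocus =
      ⊤ := by
  rw [eq_top_iff, ← range_inl_sup_iSup_range_prodMap_lof]
  exact sup_le (isCoalgMor_inl_directSumExtension _ _).range_le_coalgebraLocus <| iSup_le fun i =>
    (isCoalgMor_prodMap_lof_directSumExtension (cHV := fun i => (cHV i).toCoalgebraStruct) _
      (hincl i)).range_le_coalgebraLocus

end DirectSumExtension

/-- **Statement 14.** Let `H` be a coalgebra over a field `k`, and for each `i` in an index set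
`Γ` let `H ⊕ Vᵢ` carry a coalgebra structure such that the inclusion `H → H ⊕ Vᵢ` is a
coalgebra morphism.  Then `W = H ⊕ (⊕ᵢ Vᵢ)` carries a coalgebra structure such that each
inclusion `H ⊕ Vᵢ → W` is a coalgebra morphism; in particular the inclusion `H → W` is a
coalgebra morphism. -/
theorem exists_coalgebra_on_directSum_extension
    (k H : Type*) [Field k] [AddCommGroup H] [Module k H] (cH : Coalgebra k H)
    (Γ : Type*) [DecidableEq Γ] (V : Γ → Type*)
    [∀ i, AddCommGroup (V i)] [∀ i, Module k (V i)]
    (cHV : ∀ i, Coalgebra k (H × V i))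
    (hincl : ∀ i, IsCoalgMor cH.toCoalgebraStruct (cHV i).toCoalgebraStruct
      (LinearMap.inl k H (V i))) :
    ∃ cW : Coalgebra k (H × (⨁ i, V i)),
      (∀ i, IsCoalgMor (cHV i).toCoalgebraStruct cW.toCoalgebraStruct
        ((LinearMap.id : H →ₗ[k] H).prodMap (DirectSum.lof k Γ V i))) ∧
      IsCoalgMor cH.toCoalgebraStruct cW.toCoalgebraStruct
        (LinearMap.inl k H (⨁ i, V i)) :=
  ⟨(directSumExtension _ _).toCoalgebra (coalgebraLocus_directSumExtension cH cHV hincl),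
    fun i => isCoalgMor_prodMap_lof_directSumExtension _ _ (hincl i),
    isCoalgMor_inl_directSumExtension _ _⟩
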